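/- arXiv:1410.0950 — 2 statements merged into one kernel-verified Lean document; each statement's English description precedes it below -/
import Mathlib

section
/- Let f_i : ℝ → ℝ satisfy f_i(u) > 0 for all u ≥ 0 and all i = 1,…,n, let U > 0, and let λ > Σ_{i=1}^n f_i(0) / U. If for each i, u_i(λ) attains the infimum of f_i(u) + λu over u ≥ 0, then Σ_{i=1}^n u_i(λ) < U. -/
/-!
Comparing a minimizer `u` of `f v + λ v` on `[0, ∞)` with the competitor `v = 0` gives
`λ u ≤ f 0 - f u ≤ f 0`. Summing over `i`, `λ ∑ uᵢ ≤ ∑ fᵢ(0) < λ U`, and `λ > 0`.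
-/

open Finset

theorem mul_le_apply_zero_of_isMinOn {f : ℝ → ℝ} {lam u : ℝ} (hfu : 0 ≤ f u)
    (hmin : IsMinOn (fun v => f v + lam * v) (Set.Ici 0) u) : lam * u ≤ f 0 := by
  have h0 : f u + lam * u ≤ f 0 + lam * 0 := hmin Set.self_mem_Ici
  linarith

theorem lt_of_mul_le_of_div_lt {x S U lam : ℝ} (hS : 0 ≤ S) (hU : 0 < U)
    (hx : lam * x ≤ S) (hlam : S / U < lam) : x < U := by
  have hlam_pos : 0 < lam := (div_nonneg hS hU.le).trans_lt hlam
  have hSU : S < lam * U := (div_lt_iff₀ hU).mp hlam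
  exact (mul_lt_mul_iff_right₀ hlam_pos).mp (hx.trans_lt hSU)

/-- If `f i u > 0` for all `u ≥ 0` and all `i`, `U > 0`,
`λ > ∑ i, f i 0 / U`, and each `u i` minimizes `f i u + λ u` over `u ≥ 0`,
then `∑ i, u i < U`. -/
theorem stmt4 (n : ℕ) (f : Fin n → ℝ → ℝ)
    (hf : ∀ i, ∀ u : ℝ, 0 ≤ u → 0 < f i u)
    (U : ℝ) (hU : 0 < U)
    (lam : ℝ) (hlam : (∑ i, f i 0) / U < lam)
    (u : Fin n → ℝ) (hu : ∀ i, 0 ≤ u i)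
    (hmin : ∀ i, ∀ v : ℝ, 0 ≤ v → f i (u i) + lam * u i ≤ f i v + lam * v) :
    ∑ i, u i < U := by
  have hbound : ∀ i, lam * u i ≤ f i 0 := fun i =>
    mul_le_apply_zero_of_isMinOn (hf i _ (hu i)).le fun v hv => hmin i v hv
  have hsum : lam * ∑ i, u i ≤ ∑ i, f i 0 := by
    rw [mul_sum]
    exact sum_le_sum fun i _ => hbound i
  exact lt_of_mul_le_of_div_lt (sum_nonneg fun i _ => (hf i 0 le_rfl).le) hU hsum hlam
end

section
/- Let p ∈ (0,1), c > 0, μ ∈ ℝ, and 0 < Σ₀ < Σ₁, and set f₀(y) = φ(y; 0, Σ₀), f₁(y) = φ(y; μ, Σ₁). If D = μ² + (Σ₁ − Σ₀)(log(Σ₁/Σ₀) + 2 log((1−p)/(cp))) < 0, then (1−p)f₀(y) < cp f₁(y) for every y ∈ ℝ, and consequently ∫_ℝ min{(1−p)f₀(y), cp f₁(y)} dy = 1 − p. -/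
/-
After taking logarithms, the comparison of the two weighted Gaussian densities becomes a quadratic
inequality in `y`. Completing the square, `log (c p f₁ y) - log ((1 - p) f₀ y)` equals a square with
positive leading coefficient `(Σ₁ - Σ₀) / (2 Σ₀ Σ₁)` minus `D / (2 (Σ₁ - Σ₀))`, which is positive
when `D < 0`. Hence `(1 - p) f₀ < c p f₁` everywhere, the minimum is `(1 - p) f₀`, and its integral
is `1 - p` because `f₀` is a probability density.
-/

open MeasureTheory

/-- The Gaussian probability density function with mean `m` and variance `v`. -/
noncomputable def gaussPDF (m v y : ℝ) : ℝ :=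
  (Real.sqrt (2 * Real.pi * v))⁻¹ * Real.exp (-(y - m) ^ 2 / (2 * v))

open Real ProbabilityTheory

lemma gaussPDF_eq_gaussianPDFReal (m : ℝ) {v : ℝ} (hv : 0 ≤ v) :
    gaussPDF m v = gaussianPDFReal m v.toNNReal := by
  funext y
  simp only [gaussPDF, gaussianPDFReal, Real.coe_toNNReal _ hv]

lemma integral_gaussPDF (m : ℝ) {v : ℝ} (hv : 0 < v) : ∫ y, gaussPDF m v y = 1 := by
  rw [gaussPDF_eq_gaussianPDFReal m hv.le]
  exact integral_gaussianPDFReal_eq_one m (by simpa using hv)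

lemma mul_gaussPDF_eq_exp {a v : ℝ} (ha : 0 < a) (hv : 0 < v) (m y : ℝ) :
    a * gaussPDF m v y = exp (log a - log (2 * π * v) / 2 - (y - m) ^ 2 / (2 * v)) := by
  have hsqrt : √(2 * π * v) = exp (log (2 * π * v) / 2) := by
    rw [exp_half, exp_log (by positivity)]
  rw [gaussPDF, hsqrt, exp_sub, exp_sub, exp_log ha, neg_div, exp_neg]
  field_simp

lemma log_weighted_gauss_sub_eq {a b v₀ v₁ : ℝ} (ha : 0 < a) (hb : 0 < b) (hv₀ : 0 < v₀)
    (hv₁ : 0 < v₁) (hv : v₀ ≠ v₁) (m₀ m₁ y : ℝ) :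
    (log b - log (2 * π * v₁) / 2 - (y - m₁) ^ 2 / (2 * v₁)) -
        (log a - log (2 * π * v₀) / 2 - (y - m₀) ^ 2 / (2 * v₀)) =
      (v₁ - v₀) / (2 * v₀ * v₁) * (y - (m₀ * v₁ - m₁ * v₀) / (v₁ - v₀)) ^ 2 -
        ((m₁ - m₀) ^ 2 + (v₁ - v₀) * (log (v₁ / v₀) + 2 * log (a / b))) / (2 * (v₁ - v₀)) := by
  have h2π : 2 * π ≠ 0 := by positivity
  have hv' : v₁ - v₀ ≠ 0 := sub_ne_zero.mpr hv.symm
  rw [log_mul h2π hv₀.ne', log_mul h2π hv₁.ne', log_div hv₁.ne' hv₀.ne', log_div ha.ne' hb.ne']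
  field_simp
  ring

theorem mul_gaussPDF_lt_mul_gaussPDF {a b m₀ m₁ v₀ v₁ : ℝ} (ha : 0 < a) (hb : 0 < b)
    (hv₀ : 0 < v₀) (hv : v₀ < v₁)
    (hD : (m₁ - m₀) ^ 2 + (v₁ - v₀) * (log (v₁ / v₀) + 2 * log (a / b)) < 0) (y : ℝ) :
    a * gaussPDF m₀ v₀ y < b * gaussPDF m₁ v₁ y := by
  have hv₁ : 0 < v₁ := hv₀.trans hv
  have hgap : 0 < v₁ - v₀ := sub_pos.mpr hv
  rw [mul_gaussPDF_eq_exp ha hv₀, mul_gaussPDF_eq_exp hb hv₁, exp_lt_exp, ← sub_pos,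
    log_weighted_gauss_sub_eq ha hb hv₀ hv₁ hv.ne]
  have hsq : 0 ≤ (v₁ - v₀) / (2 * v₀ * v₁) * (y - (m₀ * v₁ - m₁ * v₀) / (v₁ - v₀)) ^ 2 := by
    positivity
  have hD' : 0 < -(((m₁ - m₀) ^ 2 + (v₁ - v₀) * (log (v₁ / v₀) + 2 * log (a / b))) /
      (2 * (v₁ - v₀))) :=
    neg_pos.mpr (div_neg_of_neg_of_pos hD (by positivity))
  linarith

lemma integral_min_mul_gaussPDF_of_le {a m v : ℝ} {g : ℝ → ℝ} (hv : 0 < v)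
    (h : ∀ y, a * gaussPDF m v y ≤ g y) :
    ∫ y, min (a * gaussPDF m v y) (g y) = a := by
  simp_rw [min_eq_left (h _)]
  rw [integral_const_mul, integral_gaussPDF m hv, mul_one]

/-- If the discriminant
`D = μ² + (Σ₁ − Σ₀)(log(Σ₁/Σ₀) + 2 log((1−p)/(cp)))` is negative, then
`(1−p)f₀(y) < c·p·f₁(y)` for every `y`, and the optimal Bayes risk
`∫ min{(1−p)f₀, c·p·f₁}` equals `1 − p`. -/
theorem stmt13 (p c μ S₀ S₁ : ℝ) (hp : p ∈ Set.Ioo (0 : ℝ) 1) (hc : 0 < c)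
    (hS₀ : 0 < S₀) (hS : S₀ < S₁)
    (D : ℝ)
    (hD : D = μ ^ 2 + (S₁ - S₀) * (Real.log (S₁ / S₀) + 2 * Real.log ((1 - p) / (c * p))))
    (hDneg : D < 0) :
    (∀ y : ℝ, (1 - p) * gaussPDF 0 S₀ y < c * p * gaussPDF μ S₁ y) ∧
      (∫ y : ℝ, min ((1 - p) * gaussPDF 0 S₀ y) (c * p * gaussPDF μ S₁ y)) = 1 - p := by
  have hlt : ∀ y : ℝ, (1 - p) * gaussPDF 0 S₀ y < c * p * gaussPDF μ S₁ y :=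
    mul_gaussPDF_lt_mul_gaussPDF (sub_pos.mpr hp.2) (mul_pos hc hp.1) hS₀ hS
      (by rw [sub_zero, ← hD]; exact hDneg)
  exact ⟨hlt, integral_min_mul_gaussPDF_of_le hS₀ fun y => (hlt y).le⟩
end
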